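/- arXiv:2102.02311 — 2 statements merged into one kernel-verified Lean document; each statement's English description precedes it below -/
import Mathlib

section
/- If X=x is part of a cause of Y=y in (M,u⃗) according to Def 2 (contrastive necessity, actual strong sufficiency), then X=x is itself a cause of Y=y according to Def 8 (minimal necessity, actual strong sufficiency). -/
open Classical

/-- A strongly recursive structural-equations (causal) model with exogenous
variables `U`, endogenous variables `V`, and values in `α`.  `rng v` is the
range `R(v)` of an endogenous variable; `F v u s` is the structural equation of
`v` evaluated in context `u` at the assignment `s` (it does not depend on
`s v`); `solve Z g u` is the unique solution of the model obtained by
intervening `Z ← g` in context `u`; `actual u` is the actual world of context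
`u`; `prec` is a well-founded order witnessing strong recursivity. -/
structure CausalModel (U V α : Type) where
  rng : V → Set α
  F : V → U → (V → α) → α
  F_rng : ∀ (v : V) (u : U) (s : V → α), F v u s ∈ rng v
  F_self : ∀ (v : V) (u : U) (s s' : V → α), (∀ w, w ≠ v → s w = s' w) → F v u s = F v u s'
  solve : Set V → (V → α) → U → V → α
  solve_mem : ∀ (Z : Set V) (g : V → α) (u : U), ∀ v ∈ Z, solve Z g u v = g v
  solve_not_mem : ∀ (Z : Set V) (g : V → α) (u : U) (v : V), v ∉ Z →
    solve Z g u v = F v u (solve Z g u)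
  solve_unique : ∀ (Z : Set V) (g : V → α) (u : U) (s : V → α),
    (∀ v ∈ Z, s v = g v) → (∀ v ∉ Z, s v = F v u s) → s = solve Z g u
  actual : U → V → α
  actual_def : ∀ (g : V → α) (u : U), solve ∅ g u = actual u
  prec : V → V → Prop
  prec_wf : WellFounded prec
  prec_dep : ∀ a b : V, (∃ (u : U) (s s' : V → α), (∀ w, s w ∈ rng w) ∧ (∀ w, s' w ∈ rng w) ∧
    (∀ w, w ≠ a → s w = s' w) ∧ F b u s ≠ F b u s') → prec a b

namespace CausalModel

variable {U V α : Type}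

/-- The assignment that is `x` on `X` and `g` elsewhere. -/
noncomputable def merge (X : Set V) (x g : V → α) : V → α :=
  fun v => if v ∈ X then x v else g v

/-- `g` is a valid setting: every variable gets a value in its range. -/
def Setting (M : CausalModel U V α) (g : V → α) : Prop := ∀ v, g v ∈ M.rng v

/-- `X⃗=x⃗` is directly sufficient for `Y⃗=y⃗`: in every context, intervening
`X⃗ ← x⃗` together with arbitrary (in-range) values for all remaining variables
`C⃗ = V ∖ (X⃗ ∪ Y⃗)` yields `Y⃗ = y⃗`. -/
def directlySuff (M : CausalModel U V α) (X : Set V) (x : V → α) (Y : Set V) (y : V → α) : Prop :=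
  ∀ g : V → α, M.Setting g → (∀ v ∈ X, g v = x v) →
    ∀ u : U, ∀ v ∈ Y, M.solve (X ∪ (X ∪ Y)ᶜ) g u v = y v

/-- Actual direct sufficiency: as `directlySuff` but only in the given context `u`. -/
def actDirectlySuff (M : CausalModel U V α) (u : U) (X : Set V) (x : V → α)
    (Y : Set V) (y : V → α) : Prop :=
  ∀ g : V → α, M.Setting g → (∀ v ∈ X, g v = x v) →
    ∀ v ∈ Y, M.solve (X ∪ (X ∪ Y)ᶜ) g u v = y v

/-- `X⃗=x⃗` is weakly sufficient for `Y⃗=y⃗`: in every context, `[X⃗ ← x⃗] Y⃗=y⃗`. -/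
def weaklySuff (M : CausalModel U V α) (X : Set V) (x : V → α) (Y : Set V) (y : V → α) : Prop :=
  ∀ u : U, ∀ v ∈ Y, M.solve X x u v = y v

/-- Actual weak sufficiency in context `u`: `(M,u) ⊨ [X⃗ ← x⃗] Y⃗=y⃗`. -/
def actWeaklySuff (M : CausalModel U V α) (u : U) (X : Set V) (x : V → α)
    (Y : Set V) (y : V → α) : Prop :=
  ∀ v ∈ Y, M.solve X x u v = y v

/-- `X⃗=x⃗` is strongly sufficient for `Y⃗=y⃗`: it is directly sufficient for some
superset `N⃗ ⊇ Y⃗` with values extending `y⃗`. -/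
def stronglySuff (M : CausalModel U V α) (X : Set V) (x : V → α) (Y : Set V) (y : V → α) : Prop :=
  ∃ (N : Set V) (n : V → α), Y ⊆ N ∧ (∀ v ∈ Y, n v = y v) ∧ M.directlySuff X x N n

/-- Actual strong sufficiency of `X⃗=x⃗` for the single effect `Y0 = y` along the
network `N` in context `u`. -/
def actStronglySuffNet (M : CausalModel U V α) (u : U) (X : Set V) (x : V → α)
    (Y0 : V) (y : α) (N : Set V) : Prop :=
  ∃ n : V → α, Y0 ∈ N ∧ n Y0 = y ∧ M.actDirectlySuff u X x N n

/-- `a` is a parent of `b`: the equation of `b` depends on the value of `a`. -/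
def IsParent (M : CausalModel U V α) (a b : V) : Prop :=
  ∃ (u : U) (s s' : V → α), M.Setting s ∧ M.Setting s' ∧
    (∀ w, w ≠ a → s w = s' w) ∧ M.F b u s ≠ M.F b u s'

/-- `a` is only a parent of `b`: the single edge `a → b` is the only directed
path from `a` to `b`. -/
def OnlyParent (M : CausalModel U V α) (a b : V) : Prop :=
  M.IsParent a b ∧ ¬ ∃ z, M.IsParent a z ∧ Relation.TransGen M.IsParent z b

/-- `R` is the set of root variables: equations of members of `R` depend only on
the context, and equations of all other variables do not depend on the context
(exogenous variables appear only in equations of the form `V = U`). -/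
def IsRootSet (M : CausalModel U V α) (R : Set V) : Prop :=
  (∀ v ∈ R, ∀ (u : U) (s s' : V → α), M.F v u s = M.F v u s') ∧
  (∀ v ∉ R, ∀ (u u' : U) (s : V → α), M.F v u s = M.F v u' s)

/-- Def 2: contrastive necessity with actual strong sufficiency (AC1, AC2, AC3). -/
def CauseDef2 (M : CausalModel U V α) (u : U) (X : Set V) (x : V → α) (Y0 : V) (y : α) : Prop :=
  (∀ v ∈ X, M.actual u v = x v) ∧ M.actual u Y0 = y ∧
  (∃ (W N : Set V) (x' : V → α), Disjoint W (X ∪ {Y0}) ∧ (∀ v ∈ X, x' v ∈ M.rng v) ∧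
      M.actStronglySuffNet u (X ∪ W) (merge X x (M.actual u)) Y0 y N ∧
      ∀ S ⊆ N, ¬ M.actStronglySuffNet u (X ∪ W) (merge X x' (M.actual u)) Y0 y S) ∧
  (∀ X' ⊂ X, ¬ ∃ (W N : Set V) (x' : V → α), Disjoint W (X' ∪ {Y0}) ∧
      (∀ v ∈ X', x' v ∈ M.rng v) ∧
      M.actStronglySuffNet u (X' ∪ W) (merge X' x (M.actual u)) Y0 y N ∧
      ∀ S ⊆ N, ¬ M.actStronglySuffNet u (X' ∪ W) (merge X' x' (M.actual u)) Y0 y S)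

/-- Def 3: contrastive necessity with actual direct sufficiency (AC1, AC2, AC3). -/
def CauseDef3 (M : CausalModel U V α) (u : U) (X : Set V) (x : V → α) (Y0 : V) (y : α) : Prop :=
  (∀ v ∈ X, M.actual u v = x v) ∧ M.actual u Y0 = y ∧
  (∃ (W : Set V) (x' : V → α), Disjoint W (X ∪ {Y0}) ∧ (∀ v ∈ X, x' v ∈ M.rng v) ∧
      M.actDirectlySuff u (X ∪ W) (merge X x (M.actual u)) {Y0} (fun _ => y) ∧
      ¬ M.actDirectlySuff u (X ∪ W) (merge X x' (M.actual u)) {Y0} (fun _ => y)) ∧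
  (∀ X' ⊂ X, ¬ ∃ (W : Set V) (x' : V → α), Disjoint W (X' ∪ {Y0}) ∧
      (∀ v ∈ X', x' v ∈ M.rng v) ∧
      M.actDirectlySuff u (X' ∪ W) (merge X' x (M.actual u)) {Y0} (fun _ => y) ∧
      ¬ M.actDirectlySuff u (X' ∪ W) (merge X' x' (M.actual u)) {Y0} (fun _ => y))

/-- Def 4 (singleton cause): contrastive necessity with non-actual weak sufficiency. -/
def CauseDef4 (M : CausalModel U V α) (u : U) (X0 : V) (x0 : α) (Y0 : V) (y : α) : Prop :=
  M.actual u X0 = x0 ∧ M.actual u Y0 = y ∧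
  ∃ (W : Set V) (x' : α), Disjoint W ({X0} ∪ {Y0} : Set V) ∧ x' ∈ M.rng X0 ∧
    M.weaklySuff ({X0} ∪ W) (merge {X0} (fun _ => x0) (M.actual u)) {Y0} (fun _ => y) ∧
    ¬ M.weaklySuff ({X0} ∪ W) (merge {X0} (fun _ => x') (M.actual u)) {Y0} (fun _ => y)

/-- Def 8 (singleton cause): minimal necessity with actual strong sufficiency
(minimality AC3 is automatic for singletons). -/
def CauseDef8 (M : CausalModel U V α) (u : U) (X0 : V) (x0 : α) (Y0 : V) (y : α) : Prop :=
  M.actual u X0 = x0 ∧ M.actual u Y0 = y ∧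
  ∃ W N : Set V, Disjoint W ({X0} ∪ {Y0} : Set V) ∧
    M.actStronglySuffNet u ({X0} ∪ W) (merge {X0} (fun _ => x0) (M.actual u)) Y0 y N ∧
    ∀ S ⊆ N, ¬ M.actStronglySuffNet u W (M.actual u) Y0 y S

/-- Def 10 (singleton cause): minimal necessity with non-actual weak sufficiency. -/
def CauseDef10 (M : CausalModel U V α) (u : U) (X0 : V) (x0 : α) (Y0 : V) (y : α) : Prop :=
  M.actual u X0 = x0 ∧ M.actual u Y0 = y ∧
  ∃ W : Set V, Disjoint W ({X0} ∪ {Y0} : Set V) ∧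
    M.weaklySuff ({X0} ∪ W) (merge {X0} (fun _ => x0) (M.actual u)) {Y0} (fun _ => y) ∧
    ¬ M.weaklySuff W (M.actual u) {Y0} (fun _ => y)

end CausalModel

/-! Folding the other members of `X⃗`, at their actual values, into the contingency `W⃗`
turns the Def 2 witness `(W⃗, N⃗, x⃗')` into a Def 8 witness for `X = x`, with contingency
`W⃗ ∪ (X⃗ ∖ {X})` and network `N⃗ ∖ X⃗`. By AC1, `x⃗` are the actual values, so sufficiency
is unchanged. If `W⃗ ∪ (X⃗ ∖ {X})` alone were sufficient along some `S⃗`, then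
`X⃗ ∖ {X}` would satisfy AC2 with contrast `x⃗'`: were `x⃗'` on `X⃗ ∖ {X}` sufficient along
some `S⃗' ⊆ S⃗`, so would be `x⃗'` on all of `X⃗`, because `X ∉ S⃗'` is set freely anyway,
contradicting AC2 for `X⃗`. This contradicts AC3. -/

namespace CausalModel

variable {U V α : Type} {M : CausalModel U V α} {u : U}

theorem merge_eq_right {X : Set V} {x g : V → α} (h : ∀ v ∈ X, x v = g v) :
    merge X x g = g := by
  funext v
  by_cases hv : v ∈ X <;> simp [merge, hv, h]

theorem merge_apply_of_mem {X : Set V} {x g : V → α} {v : V} (hv : v ∈ X) :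
    merge X x g v = x v := if_pos hv

theorem merge_apply_of_notMem {X : Set V} {x g : V → α} {v : V} (hv : v ∉ X) :
    merge X x g v = g v := if_neg hv

theorem actDirectlySuff_sdiff {Z N A : Set V} {z n : V → α}
    (h : M.actDirectlySuff u Z z N n) (hA : A ⊆ Z) :
    M.actDirectlySuff u Z z (N \ A) n := by
  intro g hg hgz v hv
  have hfree : Z ∪ (Z ∪ N \ A)ᶜ = Z ∪ (Z ∪ N)ᶜ := by
    ext w
    have := @hA w
    simp only [Set.mem_union, Set.mem_compl_iff, Set.mem_sdiff]
    tauto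
  rw [hfree]
  exact h g hg hgz v hv.1

/-- A variable off the network is set freely anyway, so fixing it keeps sufficiency. -/
theorem actDirectlySuff_insert {Z S : Set V} {z z' n : V → α} {a : V}
    (h : M.actDirectlySuff u Z z S n) (ha : a ∉ S) (hz : ∀ v ∈ Z, z' v = z v) :
    M.actDirectlySuff u (insert a Z) z' S n := by
  intro g hg hgz v hv
  have hfree : insert a Z ∪ (insert a Z ∪ S)ᶜ = Z ∪ (Z ∪ S)ᶜ := by
    ext w
    by_cases hw : w = a
    · subst hw
      simp [ha, _root_.em]
    · simp only [Set.mem_union, Set.mem_insert_iff, Set.mem_compl_iff, hw, false_or]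
  rw [hfree]
  exact h g hg (fun w hw => (hgz w (Set.mem_insert_of_mem a hw)).trans (hz w hw)) v hv

theorem actStronglySuffNet_sdiff {Z N A : Set V} {z : V → α} {Y0 : V} {y : α}
    (h : M.actStronglySuffNet u Z z Y0 y N) (hA : A ⊆ Z) (hY0 : Y0 ∉ A) :
    M.actStronglySuffNet u Z z Y0 y (N \ A) :=
  let ⟨n, hY0N, hn, hsuff⟩ := h
  ⟨n, ⟨hY0N, hY0⟩, hn, actDirectlySuff_sdiff hsuff hA⟩

theorem actStronglySuffNet_insert {Z S : Set V} {z z' : V → α} {Y0 : V} {y : α} {a : V}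
    (h : M.actStronglySuffNet u Z z Y0 y S) (ha : a ∉ S) (hz : ∀ v ∈ Z, z' v = z v) :
    M.actStronglySuffNet u (insert a Z) z' Y0 y S :=
  let ⟨n, hY0S, hn, hsuff⟩ := h
  ⟨n, hY0S, hn, actDirectlySuff_insert hsuff ha hz⟩

/-- if `X = x` is part of a cause `X⃗ = x⃗` of `Y = y` according to
Def 2 (contrastive necessity, actual strong sufficiency), then `X = x` is
itself a cause of `Y = y` according to Def 8 (minimal necessity, actual strong
sufficiency). -/
theorem part_of_def2_implies_def8 {U V α : Type} (M : CausalModel U V α) (u : U)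
    (X : Set V) (x : V → α) (Y0 : V) (y : α) (X0 : V)
    (hX0 : X0 ∈ X) (hYX : Y0 ∉ X)
    (h : CauseDef2 M u X x Y0 y) :
    CauseDef8 M u X0 (x X0) Y0 y := by
  obtain ⟨hxX, hy, ⟨W, N, x', hWdisj, hx'rng, hsuff, hnec⟩, hmin⟩ := h
  have hWX : Disjoint W X := hWdisj.mono_right Set.subset_union_left
  have hxact : ∀ v ∈ X, x v = M.actual u v := fun v hv => (hxX v hv).symm
  have hunion : insert X0 (X \ {X0} ∪ W) = X ∪ W := by
    rw [← Set.insert_union, Set.insert_sdiff_self_of_mem hX0]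
  refine ⟨hxX X0 hX0, hy, W ∪ X \ {X0}, N \ X, ?_, ?_, ?_⟩
  · rw [Set.disjoint_left] at hWdisj ⊢
    grind
  · rw [merge_eq_right (by simpa using hxact X0 hX0), Set.singleton_union, Set.union_comm,
      hunion]
    exact actStronglySuffNet_sdiff (merge_eq_right hxact ▸ hsuff) Set.subset_union_left hYX
  · intro S hS hsuffW
    refine hmin (X \ {X0}) (Set.sdiff_singleton_ssubset.2 hX0) ⟨W, S, x',
      hWdisj.mono_right (Set.union_subset_union_left _ Set.sdiff_subset),
      fun v hv => hx'rng v hv.1, ?_, fun S' hS' hsuff' => ?_⟩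
    · rwa [merge_eq_right fun v hv => hxact v hv.1, Set.union_comm]
    · have hX0S' : X0 ∉ S' := fun h => (hS (hS' h)).2 hX0
      refine hnec S' (hS'.trans (hS.trans Set.sdiff_subset))
        (hunion ▸ actStronglySuffNet_insert hsuff' hX0S' ?_)
      rintro v (hv | hv)
      · rw [merge_apply_of_mem hv.1, merge_apply_of_mem hv]
      · have hvX : v ∉ X := hWX.notMem_of_mem_left hv
        rw [merge_apply_of_notMem hvX, merge_apply_of_notMem fun h => hvX h.1]

end CausalModel
end

section
/- Out of Def 2, Def 4, Def 8 (and the three HP definitions), all satisfy the Dependence principle, while Def 3 and Def 10 do not. In particular: if (M,u⃗) ⊨ X=x ∧ Y=y and there is a value x' with (M,u⃗) ⊨ [X←x'] Y≠y, then X=x causes Y=y according to Def 2, Def 4, and Def 8. -/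
open Classical

/-!
Let `t` be the counterfactual world `[X0 ← x']`. Freezing `X0` at `x0` and every other root at
its actual value reproduces the actual world in every context, since non-root equations ignore
the context; this gives all the sufficiency clauses, with the unfrozen variables as network.
Conversely, `t` is an admissible setting that agrees with `x'` and the actual roots on the
frozen variables and solves every larger intervention, so any sufficiency claim made with
`X0 ← x'`, or with `X0` left free, would force `t Y0 = y`, contradicting the dependence.

The counterexamples are systems of equations ranked by `Fin n`; such a system is a causal model
whose solutions are reached after `n` rounds of evaluation.
-/
namespace CausalModel

variable {U V α : Type}

section Solve

variable (M : CausalModel U V α)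

lemma actual_eq_F (u : U) (v : V) : M.actual u v = M.F v u (M.actual u) := by
  rw [← M.actual_def (M.actual u) u]
  exact M.solve_not_mem ∅ _ u v (Set.notMem_empty v)

lemma eq_actual_of_forall_eq_F {u : U} {s : V → α} (hs : ∀ v, s v = M.F v u s) :
    s = M.actual u :=
  (M.solve_unique ∅ s u s (fun _ h => absurd h (Set.notMem_empty _)) fun v _ => hs v).trans
    (M.actual_def s u)

lemma solve_eq_self {Z : Set V} {s : V → α} {u : U} (hs : ∀ v ∉ Z, s v = M.F v u s) :
    M.solve Z s u = s :=
  (M.solve_unique Z s u s (fun _ _ => rfl) hs).symm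

lemma solve_congr {Z : Set V} {g g' : V → α} (u : U) (h : ∀ v ∈ Z, g v = g' v) :
    M.solve Z g u = M.solve Z g' u :=
  M.solve_unique Z g' u _ (fun v hv => (M.solve_mem Z g u v hv).trans (h v hv))
    (M.solve_not_mem Z g u)

lemma solve_solve_of_subset {Z Z' : Set V} (hZ : Z ⊆ Z') (g : V → α) (u : U) :
    M.solve Z' (M.solve Z g u) u = M.solve Z g u :=
  (M.solve_unique Z' _ u _ (fun _ _ => rfl)
    fun v hv => M.solve_not_mem Z g u v fun h => hv (hZ h)).symm

lemma setting_solve {Z : Set V} {g : V → α} (u : U) (hg : ∀ v ∈ Z, g v ∈ M.rng v) :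
    M.Setting (M.solve Z g u) := by
  intro v
  by_cases hv : v ∈ Z
  · rw [M.solve_mem Z g u v hv]; exact hg v hv
  · rw [M.solve_not_mem Z g u v hv]; exact M.F_rng v u _

lemma not_actStronglySuffNet_of_solve {Z X N : Set V} {g x : V → α} {u : U} {Y0 : V} {y : α}
    (hg : ∀ v ∈ Z, g v ∈ M.rng v) (hZ : Z ⊆ X ∪ (X ∪ N)ᶜ)
    (hx : ∀ v ∈ X, x v = M.solve Z g u v) (hY0 : M.solve Z g u Y0 ≠ y) :
    ¬ M.actStronglySuffNet u X x Y0 y N := by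
  rintro ⟨n, hY0N, hnY0, hsuff⟩
  have h := hsuff _ (M.setting_solve u hg) (fun v hv => (hx v hv).symm) Y0 hY0N
  rw [M.solve_solve_of_subset hZ] at h
  exact hY0 (h.trans hnY0)

end Solve

lemma merge_empty (x g : V → α) : merge ∅ x g = g := by
  funext v; simp [merge]

namespace IsRootSet

variable {M : CausalModel U V α} {R : Set V}

lemma solve_apply_of_mem (hR : M.IsRootSet R) {Z : Set V} {g : V → α} {u : U} {v : V}
    (hvR : v ∈ R) (hvZ : v ∉ Z) : M.solve Z g u v = M.actual u v := by
  rw [M.solve_not_mem Z g u v hvZ, hR.1 v hvR u _ (M.actual u), ← M.actual_eq_F]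

/-- Non-root equations ignore the context, so once every root is frozen at its actual value
the actual world solves the equations in every context. -/
lemma solve_eq_actual (hR : M.IsRootSet R) {Z : Set V} {g : V → α} {u : U} (hRZ : R ⊆ Z)
    (hg : ∀ v ∈ Z, g v = M.actual u v) (u' : U) : M.solve Z g u' = M.actual u :=
  (M.solve_unique Z g u' _ (fun v hv => (hg v hv).symm) fun v hv => by
    rw [hR.2 v (fun hvR => hv (hRZ hvR)) u' u, ← M.actual_eq_F]).symm

lemma actStronglySuffNet (hR : M.IsRootSet R) {Z : Set V} {g : V → α} {u : U} {Y0 : V}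
    (hRZ : R ⊆ Z) (hg : ∀ v ∈ Z, g v = M.actual u v) (hY0 : Y0 ∉ Z) :
    M.actStronglySuffNet u Z g Y0 (M.actual u Y0) Zᶜ := by
  refine ⟨M.actual u, hY0, rfl, fun g' _ hg' v _ => ?_⟩
  rw [show Z ∪ (Z ∪ Zᶜ)ᶜ = Z by simp,
    hR.solve_eq_actual hRZ (fun w hw => (hg' w hw).trans (hg w hw))]

lemma weaklySuff (hR : M.IsRootSet R) {Z : Set V} {g : V → α} {u : U} {Y0 : V}
    (hRZ : R ⊆ Z) (hg : ∀ v ∈ Z, g v = M.actual u v) :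
    M.weaklySuff Z g {Y0} (fun _ => M.actual u Y0) := by
  rintro u' v rfl
  rw [hR.solve_eq_actual hRZ hg]

lemma notMem_of_solve_ne (hR : M.IsRootSet R) {u : U} {X0 Y0 : V} {x' : α}
    (hne : X0 ≠ Y0) (hdep : M.solve {X0} (fun _ => x') u Y0 ≠ M.actual u Y0) : Y0 ∉ R :=
  fun hY0R => hdep (hR.solve_apply_of_mem hY0R hne.symm)

lemma merge_eqOn_solve (hR : M.IsRootSet R) (u : U) (X0 : V) (x' : α) :
    ∀ v ∈ {X0} ∪ R \ {X0}, merge {X0} (fun _ => x') (M.actual u) v =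
      M.solve {X0} (fun _ => x') u v := by
  rintro v (rfl | ⟨hvR, hvX0⟩)
  · simp [merge, M.solve_mem]
  · simp only [merge, if_neg hvX0]
    exact (hR.solve_apply_of_mem hvR hvX0).symm

end IsRootSet

section Dependence

variable {M : CausalModel U V α} {R : Set V} {u : U} {X0 Y0 : V} {x0 x' : α}

lemma disjoint_diff_singleton {Y0 : V} (hY0R : Y0 ∉ R) :
    Disjoint (R \ {X0}) ({X0} ∪ {Y0}) := by
  rw [Set.disjoint_left]
  rintro v ⟨hvR, hvX0⟩ (h | rfl)
  exacts [hvX0 h, hY0R hvR]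

lemma notMem_union_diff_singleton (hY0R : Y0 ∉ R) (hne : X0 ≠ Y0) :
    Y0 ∉ {X0} ∪ R \ {X0} := by
  rintro (h | ⟨h, -⟩)
  exacts [hne (Set.mem_singleton_iff.mp h).symm, hY0R h]

lemma merge_eqOn_actual (hx : M.actual u X0 = x0) :
    ∀ v ∈ {X0} ∪ R \ {X0}, merge {X0} (fun _ => x0) (M.actual u) v = M.actual u v := by
  intro v _
  by_cases h : v = X0
  · subst h; simp [merge, hx]
  · simp [merge, h]

lemma causeDef4_of_dependence (hR : M.IsRootSet R) (hne : X0 ≠ Y0)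
    (hx : M.actual u X0 = x0) (hx' : x' ∈ M.rng X0)
    (hdep : M.solve {X0} (fun _ => x') u Y0 ≠ M.actual u Y0) :
    CauseDef4 M u X0 x0 Y0 (M.actual u Y0) := by
  refine ⟨hx, rfl, R \ {X0}, x', disjoint_diff_singleton (hR.notMem_of_solve_ne hne hdep),
    hx', hR.weaklySuff (by simp) (merge_eqOn_actual hx), ?_⟩
  intro hsuff
  have hY0 := hsuff u Y0 rfl
  rw [M.solve_congr u (hR.merge_eqOn_solve u X0 x'),
    M.solve_solve_of_subset Set.subset_union_left] at hY0
  exact hdep hY0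

lemma causeDef8_of_dependence (hR : M.IsRootSet R) (hne : X0 ≠ Y0)
    (hx : M.actual u X0 = x0) (hx' : x' ∈ M.rng X0)
    (hdep : M.solve {X0} (fun _ => x') u Y0 ≠ M.actual u Y0) :
    CauseDef8 M u X0 x0 Y0 (M.actual u Y0) := by
  have hY0R := hR.notMem_of_solve_ne hne hdep
  refine ⟨hx, rfl, R \ {X0}, ({X0} ∪ R \ {X0})ᶜ, disjoint_diff_singleton hY0R,
    hR.actStronglySuffNet (by simp) (merge_eqOn_actual hx)
      (notMem_union_diff_singleton hY0R hne), fun S hS => ?_⟩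
  refine M.not_actStronglySuffNet_of_solve (by rintro v rfl; exact hx') ?_
    (fun v ⟨hvR, hvX0⟩ => (hR.solve_apply_of_mem hvR hvX0).symm) hdep
  rintro v rfl
  exact Or.inr fun h => h.elim (fun h => h.2 rfl) fun h => hS h (Or.inl rfl)

lemma causeDef2_of_dependence (hR : M.IsRootSet R) (hne : X0 ≠ Y0)
    (hx : M.actual u X0 = x0) (hx' : x' ∈ M.rng X0)
    (hdep : M.solve {X0} (fun _ => x') u Y0 ≠ M.actual u Y0) :
    CauseDef2 M u {X0} (fun _ => x0) Y0 (M.actual u Y0) := by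
  have hY0R := hR.notMem_of_solve_ne hne hdep
  refine ⟨by rintro v rfl; exact hx, rfl, ⟨R \ {X0}, ({X0} ∪ R \ {X0})ᶜ, fun _ => x',
    disjoint_diff_singleton hY0R, by rintro v rfl; exact hx',
    hR.actStronglySuffNet (by simp) (merge_eqOn_actual hx)
      (notMem_union_diff_singleton hY0R hne), fun S _ => ?_⟩, ?_⟩
  · exact M.not_actStronglySuffNet_of_solve (by rintro v rfl; exact hx')
      (Set.subset_union_left.trans Set.subset_union_left) (hR.merge_eqOn_solve u X0 x') hdep
  · intro X' hX'
    obtain rfl := Set.ssubset_singleton_iff.mp hX'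
    rintro ⟨W, N, x'', -, -, hsuff, hnot⟩
    simp only [merge_empty] at hsuff hnot
    exact hnot N subset_rfl hsuff

end Dependence

section OfRank

variable (F : V → U → (V → α) → α) {n : ℕ} (r : V → Fin n)

def RankedBy : Prop :=
  ∀ v u s s', (∀ w, r w < r v → s w = s' w) → F v u s = F v u s'

noncomputable def evalStep (Z : Set V) (g : V → α) (u : U) (s : V → α) : V → α :=
  fun v => if v ∈ Z then g v else F v u s

variable {F r}

lemma evalStep_iterate_apply_eq (hF : RankedBy F r) (Z : Set V) (g : V → α) (u : U) (m : ℕ)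
    (s s' : V → α) {v : V} (hv : (r v : ℕ) < m) :
    (evalStep F Z g u)^[m] s v = (evalStep F Z g u)^[m] s' v := by
  induction m generalizing v with
  | zero => exact absurd hv (Nat.not_lt_zero _)
  | succ m ih =>
    simp only [Function.iterate_succ_apply', evalStep]
    split_ifs
    · rfl
    · exact hF v u _ _ fun w hw => ih (by omega)

lemma evalStep_iterate_eq (hF : RankedBy F r) (Z : Set V) (g : V → α) (u : U) (s s' : V → α) :
    (evalStep F Z g u)^[n] s = (evalStep F Z g u)^[n] s' :=
  funext fun v => evalStep_iterate_apply_eq hF Z g u n s s' (r v).isLt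

lemma evalStep_iterate_fixed (hF : RankedBy F r) (Z : Set V) (g : V → α) (u : U) (s : V → α) :
    evalStep F Z g u ((evalStep F Z g u)^[n] s) = (evalStep F Z g u)^[n] s := by
  rw [← Function.iterate_succ_apply' (evalStep F Z g u), Function.iterate_succ_apply]
  exact evalStep_iterate_eq hF Z g u _ _

variable [Inhabited α]

noncomputable def ofRank (hF : RankedBy F r) : CausalModel U V α where
  rng _ := Set.univ
  F := F
  F_rng _ _ _ := Set.mem_univ _
  F_self v u s s' h := hF v u s s' fun w hw => h w (ne_of_apply_ne r hw.ne)
  solve Z g u := (evalStep F Z g u)^[n] g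
  solve_mem Z g u v hv :=
    (congrFun (evalStep_iterate_fixed hF Z g u g) v).symm.trans (if_pos hv)
  solve_not_mem Z g u v hv :=
    (congrFun (evalStep_iterate_fixed hF Z g u g) v).symm.trans (if_neg hv)
  solve_unique Z g u s hZ hnZ := by
    have hs : evalStep F Z g u s = s := by
      funext v
      by_cases hv : v ∈ Z
      · simp only [evalStep, if_pos hv, hZ v hv]
      · simp only [evalStep, if_neg hv, ← hnZ v hv]
    rw [← Function.iterate_fixed hs n]
    exact evalStep_iterate_eq hF Z g u s g
  actual u := (evalStep F ∅ default u)^[n] default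
  actual_def g u := by
    have : evalStep F ∅ g u = evalStep F ∅ default u := by
      funext s v; simp [evalStep]
    simp only [this]
    exact evalStep_iterate_eq hF ∅ _ u g default
  prec a b := r a < r b
  prec_wf := InvImage.wf r wellFounded_lt
  prec_dep a b := by
    rintro ⟨u, s, s', -, -, hss', hne⟩
    by_contra hab
    exact hne (hF b u s s' fun w hw => hss' w (by rintro rfl; exact hab hw))

end OfRank

inductive Var3 : Type
  | x | a | y
  deriving DecidableEq

lemma Var3.subset_a_of_disjoint {W : Set Var3} (hW : Disjoint W ({.x} ∪ {.y})) :
    W ⊆ {.a} := by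
  rintro (_ | _ | _) hv
  · exact absurd (Or.inl rfl) (Set.disjoint_left.mp hW hv)
  · rfl
  · exact absurd (Or.inr rfl) (Set.disjoint_left.mp hW hv)

def chainEq : Var3 → Unit → (Var3 → Bool) → Bool
  | .x, _, _ => true
  | .a, _, s => s .x
  | .y, _, s => s .a

def chainRank : Var3 → Fin 3
  | .x => 0 | .a => 1 | .y => 2

lemma rankedBy_chainEq : RankedBy chainEq chainRank := by
  rintro (_ | _ | _) u s s' h <;> simp only [chainEq] <;> exact h _ (by decide)

noncomputable def chainModel : CausalModel Unit Var3 Bool := ofRank rankedBy_chainEq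

lemma chainModel_isRootSet : chainModel.IsRootSet ∅ :=
  ⟨fun v hv => absurd hv (Set.notMem_empty v), fun _ _ _ _ _ => rfl⟩

lemma chainModel_actual : chainModel.actual () = fun _ => true :=
  (chainModel.eq_actual_of_forall_eq_F (by rintro (_ | _ | _) <;> rfl)).symm

lemma chainModel_solve_x_false : chainModel.solve {.x} (fun _ => false) () = fun _ => false :=
  chainModel.solve_eq_self (by rintro (_ | _ | _) hv <;> first | rfl | exact absurd rfl hv)

/-- `X` is not a parent of `Y`: freezing `A` makes `Y` ignore `X`, and leaving `A` free lets the
setting of `A` override `X`. -/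
lemma not_causeDef3_chainModel : ¬ CauseDef3 chainModel () {.x} (fun _ => true) .y true := by
  rintro ⟨-, -, ⟨W, x', hdisj, -, hsuff, hnot⟩, -⟩
  rcases Set.subset_singleton_iff_eq.mp (Var3.subset_a_of_disjoint hdisj) with rfl | rfl
  · have hY := hsuff (fun v => decide (v = .x)) (fun _ => Set.mem_univ _)
      (by rintro v (rfl | hv) <;> simp_all [merge]) .y rfl
    rw [chainModel.solve_eq_self (by rintro (_ | _ | _) hv <;> first | rfl | simp at hv)] at hY
    exact Bool.false_ne_true hY
  · refine hnot fun g _ hg v hv => ?_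
    rw [Set.mem_singleton_iff.mp hv, chainModel.solve_not_mem _ _ _ _ (by simp)]
    change chainModel.solve _ g () .a = true
    rw [chainModel.solve_mem _ _ _ _ (by simp), hg .a (by simp)]
    simp [merge, chainModel_actual]

def forkEq : Var3 → Bool → (Var3 → Bool) → Bool
  | .a, u, _ => u
  | .x, _, s => s .a
  | .y, _, s => s .x && s .a

def forkRank : Var3 → Fin 3
  | .a => 0 | .x => 1 | .y => 2

lemma rankedBy_forkEq : RankedBy forkEq forkRank := by
  rintro (_ | _ | _) u s s' h <;> simp only [forkEq]
  · exact h _ (by decide)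
  · rw [h .x (by decide), h .a (by decide)]

noncomputable def forkModel : CausalModel Bool Var3 Bool := ofRank rankedBy_forkEq

lemma forkModel_isRootSet : forkModel.IsRootSet {.a} := by
  refine ⟨by rintro v rfl u s s'; rfl, ?_⟩
  rintro (_ | _ | _) hv u u' s
  exacts [rfl, absurd rfl hv, rfl]

lemma forkModel_actual (u : Bool) : forkModel.actual u = fun _ => u :=
  (forkModel.eq_actual_of_forall_eq_F (by rintro (_ | _ | _) <;> cases u <;> rfl)).symm

lemma forkModel_solve_x_false :
    forkModel.solve {.x} (fun _ => false) true = fun v => decide (v = .a) :=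
  forkModel.solve_unique _ _ _ _ (by rintro v rfl; rfl)
    (by rintro (_ | _ | _) hv <;> first | rfl | exact absurd rfl hv) |>.symm

/-- `A = 1` alone is weakly sufficient for `Y = 1`, while without `A` the context `A := 0`
defeats `X = 1`. -/
lemma not_causeDef10_forkModel : ¬ CauseDef10 forkModel true .x true .y true := by
  rintro ⟨-, -, W, hdisj, hsuff, hnot⟩
  rcases Set.subset_singleton_iff_eq.mp (Var3.subset_a_of_disjoint hdisj) with rfl | rfl
  · have hY := hsuff false .y rfl
    rw [← forkModel.solve_unique _ _ _ (fun v => decide (v = .x))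
      (by rintro v (rfl | hv) <;> simp_all [merge])
      (by rintro (_ | _ | _) hv <;> first | rfl | simp at hv)] at hY
    exact Bool.false_ne_true hY
  · refine hnot fun u v hv => ?_
    rw [Set.mem_singleton_iff.mp hv, forkModel_actual,
      forkModel.solve_eq_self (by rintro (_ | _ | _) hv <;> first | rfl | exact absurd rfl hv)]

/-- Def 2, Def 4, and Def 8 satisfy the Dependence principle
(counterfactual dependence of `Y=y` on a singleton `X=x` implies causation),
while Def 3 and Def 10 do not (witnessed by counterexample models).  Models
are assumed to satisfy the root-variable restriction. -/
theorem dependence_principle :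
    (∀ (U V α : Type) (M : CausalModel U V α) (R : Set V), M.IsRootSet R →
      ∀ (u : U) (X0 Y0 : V) (x0 y x' : α), X0 ≠ Y0 →
        M.actual u X0 = x0 → M.actual u Y0 = y → x' ∈ M.rng X0 →
        M.solve {X0} (fun _ => x') u Y0 ≠ y →
        CauseDef2 M u {X0} (fun _ => x0) Y0 y ∧ CauseDef4 M u X0 x0 Y0 y ∧
          CauseDef8 M u X0 x0 Y0 y) ∧
    (∃ (U V α : Type) (M : CausalModel U V α) (R : Set V) (_ : M.IsRootSet R)
        (u : U) (X0 Y0 : V) (x0 y x' : α), X0 ≠ Y0 ∧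
        M.actual u X0 = x0 ∧ M.actual u Y0 = y ∧ x' ∈ M.rng X0 ∧
        M.solve {X0} (fun _ => x') u Y0 ≠ y ∧
        ¬ CauseDef3 M u {X0} (fun _ => x0) Y0 y) ∧
    (∃ (U V α : Type) (M : CausalModel U V α) (R : Set V) (_ : M.IsRootSet R)
        (u : U) (X0 Y0 : V) (x0 y x' : α), X0 ≠ Y0 ∧
        M.actual u X0 = x0 ∧ M.actual u Y0 = y ∧ x' ∈ M.rng X0 ∧
        M.solve {X0} (fun _ => x') u Y0 ≠ y ∧
        ¬ CauseDef10 M u X0 x0 Y0 y) := by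
  refine ⟨fun U V α M R hR u X0 Y0 x0 y x' hne hx hy hx' hdep => ?_, ?_, ?_⟩
  · subst hy
    exact ⟨causeDef2_of_dependence hR hne hx hx' hdep, causeDef4_of_dependence hR hne hx hx' hdep,
      causeDef8_of_dependence hR hne hx hx' hdep⟩
  · refine ⟨Unit, Var3, Bool, chainModel, ∅, chainModel_isRootSet, (), .x, .y, true, true, false,
      by decide, by rw [chainModel_actual], by rw [chainModel_actual], Set.mem_univ _,
      by simp [chainModel_solve_x_false], not_causeDef3_chainModel⟩
  · refine ⟨Bool, Var3, Bool, forkModel, {.a}, forkModel_isRootSet, true, .x, .y, true, true,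
      false, by decide, by rw [forkModel_actual], by rw [forkModel_actual], Set.mem_univ _,
      by simp [forkModel_solve_x_false], not_causeDef10_forkModel⟩

end CausalModel
end
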